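/- Let Q be an associative quasigroup and H a Q-graded Hopf quasigroup with associator δ(h,g,f) = ((h_{(1)}g_{(1)})f_{(1)})S_{pqr}(h_{(2)}(g_{(2)}f_{(2)})). Then δ(h_{(1)}, S_p(h_{(2)}), g) = ε_p(h)ε_q(g)1 for all h ∈ H_p, g ∈ H_q. -/

import Mathlib

/-!
Forgetting the grading, `⊕ₚ H_p` with the induced product, unit and antipode is an ordinary Hopf
quasigroup, so it suffices to compute there in Sweedler notation. The key fact is that the antipode
is anti-comultiplicative, `Δ(S a) = S a₂ ⊗ S a₁`, which follows by expanding `(S a₁ ⊗ 1) Δ(a₂ S a₃)`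
in two ways. With it, coassociativity gives `δ(h₁, S h₂, g) = ((h₁ S h₄) g₁) S(h₂ (S h₃ g₂))`, and
the quasigroup identities collapse successively `h₂ (S h₃ g₂) = ε(h₂) g₂`, `h₁ S h₂ = ε(h) 1` and
`g₁ S g₂ = ε(g) 1`.
-/

open TensorProduct

universe u v w

/-- A quasigroup: a set with product, identity `e`, and two-sided inverses satisfying
`p⁻¹(pq) = q` and `(qp)p⁻¹ = q`. -/
structure QuasigroupStruct (Q : Type u) where
  mul : Q → Q → Q
  one : Q
  inv : Q → Q
  mul_one : ∀ p, mul p one = p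
  one_mul : ∀ p, mul one p = p
  inv_mul_cancel : ∀ p q, mul (inv p) (mul p q) = q
  mul_inv_cancel : ∀ p q, mul (mul q p) (inv p) = q

namespace QuasigroupStruct

variable {Q : Type u} (G : QuasigroupStruct Q)

lemma inv_mul_self (p : Q) : G.mul (G.inv p) p = G.one := by
  have h := G.inv_mul_cancel p G.one
  rwa [G.mul_one] at h

lemma mul_inv_self (p : Q) : G.mul p (G.inv p) = G.one := by
  have h := G.mul_inv_cancel p G.one
  rwa [G.one_mul] at h

lemma inv_inv (p : Q) : G.inv (G.inv p) = p := by
  have h := G.inv_mul_cancel (G.inv p) p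
  rw [G.inv_mul_self p] at h
  rwa [G.mul_one] at h

lemma mul_inv_cancel_left (p q : Q) : G.mul p (G.mul (G.inv p) q) = q := by
  have h := G.inv_mul_cancel (G.inv p) q
  rwa [G.inv_inv] at h

lemma inv_mul_cancel_right (p q : Q) : G.mul (G.mul q (G.inv p)) p = q := by
  have h := G.mul_inv_cancel (G.inv p) q
  rwa [G.inv_inv] at h

lemma mul_inv_rev (p q : Q) : G.inv (G.mul p q) = G.mul (G.inv q) (G.inv p) := by
  have h1 : G.mul q (G.inv (G.mul p q)) = G.inv p := by
    have h := G.mul_inv_cancel (G.mul p q) (G.inv p)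
    rwa [G.inv_mul_cancel p q] at h
  calc G.inv (G.mul p q)
      = G.mul (G.inv q) (G.mul q (G.inv (G.mul p q))) := (G.inv_mul_cancel q _).symm
    _ = G.mul (G.inv q) (G.inv p) := by rw [h1]

lemma inv_one : G.inv G.one = G.one := by
  have h := G.inv_mul_cancel G.one G.one
  rwa [G.one_mul, G.mul_one] at h

end QuasigroupStruct

/-- Transport along an equality of grades, as a linear map. -/
def gcl {Q : Type u} {H : Q → Type w} {k : Type v} [CommSemiring k]
    [∀ p, AddCommMonoid (H p)] [∀ p, Module k (H p)] {p q : Q} (e : p = q) :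
    H p →ₗ[k] H q := by subst e; exact LinearMap.id

/-- A `Q`-graded Hopf quasigroup: a family of coassociative counital coalgebras `H p`
with a (not necessarily associative) graded multiplication, unit and antipode family,
such that the multiplications and the unit are coalgebra maps and the antipode
satisfies the Hopf quasigroup axioms. -/
structure GradedHopfQuasigroup (k : Type v) [CommRing k] {Q : Type u} (G : QuasigroupStruct Q)
    (H : Q → Type w) [∀ p, AddCommGroup (H p)] [∀ p, Module k (H p)]
    [∀ p, Coalgebra k (H p)] where
  mul : ∀ p q, H p →ₗ[k] H q →ₗ[k] H (G.mul p q)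
  one : H G.one
  antipode : ∀ p, H p →ₗ[k] H (G.inv p)
  mul_one' : ∀ (p : Q) (h : H p), gcl (k := k) (G.mul_one p) ((mul p G.one h) one) = h
  one_mul' : ∀ (p : Q) (h : H p), gcl (k := k) (G.one_mul p) ((mul G.one p one) h) = h
  comul_mul : ∀ (p q : Q) (h : H p) (g : H q),
    Coalgebra.comul (R := k) ((mul p q h) g) =
      (TensorProduct.map (TensorProduct.lift (mul p q)) (TensorProduct.lift (mul p q)))
        ((TensorProduct.tensorTensorTensorComm k (H p) (H p) (H q) (H q))
          (Coalgebra.comul h ⊗ₜ[k] Coalgebra.comul g))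
  counit_mul : ∀ (p q : Q) (h : H p) (g : H q),
    Coalgebra.counit (R := k) ((mul p q h) g) =
      Coalgebra.counit (R := k) h * Coalgebra.counit (R := k) g
  comul_one : Coalgebra.comul (R := k) one = one ⊗ₜ[k] one
  counit_one : Coalgebra.counit (R := k) one = 1
  /-- `S (h₁) (h₂ g) = ε(h) g` -/
  antipode_mul_left : ∀ (p q : Q) (h : H p) (g : H q),
    TensorProduct.lift
      (((mul (G.inv p) (G.mul p q)).comp (antipode p)).compl₂ ((mul p q).flip g))
      (Coalgebra.comul h)
      = gcl (k := k) (G.inv_mul_cancel p q).symm (Coalgebra.counit (R := k) h • g)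
  /-- `h₁ (S (h₂) g) = ε(h) g` -/
  antipode_mul_left' : ∀ (p q : Q) (h : H p) (g : H q),
    TensorProduct.lift
      ((mul p (G.mul (G.inv p) q)).compl₂ (((mul (G.inv p) q).flip g).comp (antipode p)))
      (Coalgebra.comul h)
      = gcl (k := k) (G.mul_inv_cancel_left p q).symm (Coalgebra.counit (R := k) h • g)
  /-- `(g S (h₁)) h₂ = ε(h) g` -/
  antipode_mul_right : ∀ (p q : Q) (h : H p) (g : H q),
    TensorProduct.lift
      ((mul (G.mul q (G.inv p)) p).comp ((mul q (G.inv p) g).comp (antipode p)))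
      (Coalgebra.comul h)
      = gcl (k := k) (G.inv_mul_cancel_right p q).symm (Coalgebra.counit (R := k) h • g)
  /-- `(g h₁) S (h₂) = ε(h) g` -/
  antipode_mul_right' : ∀ (p q : Q) (h : H p) (g : H q),
    TensorProduct.lift
      (((mul (G.mul q p) (G.inv p)).comp (mul q p g)).compl₂ (antipode p))
      (Coalgebra.comul h)
      = gcl (k := k) (G.mul_inv_cancel p q).symm (Coalgebra.counit (R := k) h • g)

variable {k : Type v} [Field k] {Q : Type u} {G : QuasigroupStruct Q}
  {H : Q → Type w} [∀ p, AddCommGroup (H p)] [∀ p, Module k (H p)]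
  [∀ p, Coalgebra k (H p)]

variable (A : GradedHopfQuasigroup k G H)

/-- Uncurried graded multiplication. -/
noncomputable def mm (p q : Q) : H p ⊗[k] H q →ₗ[k] H (G.mul p q) :=
  TensorProduct.lift (A.mul p q)

/-- `h ⊗ (g ⊗ f) ↦ (hg)f`. -/
noncomputable def mulLeft (p q r : Q) :
    H p ⊗[k] (H q ⊗[k] H r) →ₗ[k] H (G.mul (G.mul p q) r) :=
  (mm A (G.mul p q) r) ∘ₗ
    (TensorProduct.map (mm A p q) LinearMap.id) ∘ₗ
      (TensorProduct.assoc k (H p) (H q) (H r)).symm.toLinearMap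

/-- `h ⊗ (g ⊗ f) ↦ h(gf)`. -/
noncomputable def mulRight (p q r : Q) :
    H p ⊗[k] (H q ⊗[k] H r) →ₗ[k] H (G.mul p (G.mul q r)) :=
  (mm A p (G.mul q r)) ∘ₗ LinearMap.lTensor (H p) (mm A q r)

/-- `h ⊗ (g ⊗ f) ↦ Δh ⊗ (Δg ⊗ Δf)`, rearranged into
`(h₁ ⊗ (g₁ ⊗ f₁)) ⊗ (h₂ ⊗ (g₂ ⊗ f₂))`. -/
noncomputable def comul3 (p q r : Q) :
    H p ⊗[k] (H q ⊗[k] H r) →ₗ[k]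
      (H p ⊗[k] (H q ⊗[k] H r)) ⊗[k] (H p ⊗[k] (H q ⊗[k] H r)) :=
  (TensorProduct.tensorTensorTensorComm k (H p) (H p)
      (H q ⊗[k] H r) (H q ⊗[k] H r)).toLinearMap ∘ₗ
    (LinearMap.lTensor (H p ⊗[k] H p)
      (TensorProduct.tensorTensorTensorComm k (H q) (H q) (H r) (H r)).toLinearMap) ∘ₗ
      (TensorProduct.map (Coalgebra.comul (R := k))
        (TensorProduct.map (Coalgebra.comul (R := k)) (Coalgebra.comul (R := k))))

/-- Uncurry a trilinear map. -/
noncomputable def uncurry3 {P : Type w}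
    [AddCommGroup P] [Module k P]
    {X Y Z : Type w} [AddCommGroup X] [Module k X] [AddCommGroup Y] [Module k Y]
    [AddCommGroup Z] [Module k Z]
    (f : X →ₗ[k] Y →ₗ[k] Z →ₗ[k] P) : X ⊗[k] (Y ⊗[k] Z) →ₗ[k] P :=
  TensorProduct.lift ((TensorProduct.lift.equiv (RingHom.id k) Y Z P).toLinearMap ∘ₗ f)

/-- The associator `δ(h,g,f) = ((h₁g₁)f₁) S((h₂(g₂f₂)))`, valued in `H e`. -/
noncomputable def delta0
    (hassoc : ∀ a b c, G.mul (G.mul a b) c = G.mul a (G.mul b c)) (p q r : Q) :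
    H p →ₗ[k] H q →ₗ[k] H r →ₗ[k] H G.one :=
  (TensorProduct.lcurry (RingHom.id k) (H q) (H r) (H G.one)) ∘ₗ
    TensorProduct.curry
      ((gcl (k := k) (show G.mul (G.mul (G.mul p q) r)
            (G.inv (G.mul p (G.mul q r))) = G.one by
          rw [hassoc p q r]; exact G.mul_inv_self _)) ∘ₗ
        (mm A (G.mul (G.mul p q) r) (G.inv (G.mul p (G.mul q r)))) ∘ₗ
          (TensorProduct.map (mulLeft A p q r)
            ((A.antipode (G.mul p (G.mul q r))) ∘ₗ mulRight A p q r)) ∘ₗ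
            comul3 p q r)

/-- `δ'` is an associator for `H` :
`(hg)f = δ'(h₁,g₁,f₁) (h₂(g₂f₂))`. -/
noncomputable def IsAssociator
    (hassoc : ∀ a b c, G.mul (G.mul a b) c = G.mul a (G.mul b c))
    (δ' : ∀ p q r : Q, H p →ₗ[k] H q →ₗ[k] H r →ₗ[k] H G.one) : Prop :=
  ∀ (p q r : Q) (x : H p ⊗[k] (H q ⊗[k] H r)),
    mulLeft A p q r x
      = gcl (k := k) (show G.mul G.one (G.mul p (G.mul q r))
            = G.mul (G.mul p q) r by rw [G.one_mul, hassoc p q r])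
          ((mm A G.one (G.mul p (G.mul q r)))
            ((TensorProduct.map (uncurry3 (δ' p q r)) (mulRight A p q r))
              (comul3 p q r x)))

open Coalgebra

namespace Coalgebra

variable {k C : Type*} [CommSemiring k] [AddCommMonoid C] [Module k C] {a b : C} {ι : Type*}

def Repr.ofEq [CoalgebraStruct k C] (r : Repr k a ι) (h : a = b) : Repr k b ι :=
  ⟨r.index, r.left, r.right, h ▸ r.eq⟩

variable [Coalgebra k C] {W : Type*} [AddCommMonoid W] [Module k W]

lemma Repr.sum_eq_lift_comul (r : Repr k a ι) (F : C →ₗ[k] C →ₗ[k] W) :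
    ∑ i ∈ r.index, F (r.left i) (r.right i) = lift F (comul a) := by
  simp [← r.eq, map_sum]

lemma Repr.sum_counit_smul_map (r : Repr k a ι) (F : C →ₗ[k] W) :
    ∑ i ∈ r.index, counit (R := k) (r.left i) • F (r.right i) = F a := by
  simp_rw [← map_smul, ← map_sum, sum_counit_smul]

lemma Repr.sum_counit_right_smul_map (r : Repr k a ι) (F : C →ₗ[k] W) :
    ∑ i ∈ r.index, counit (R := k) (r.right i) • F (r.left i) = F a := by
  simpa only [map_sum, lift.tmul, LinearMap.comp_apply, LinearMap.flip_apply,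
    LinearMap.lsmul_apply, one_smul] using
    congr(lift ((LinearMap.lsmul k W).flip ∘ₗ F) $(sum_tmul_counit_eq (R := k) r))

lemma Repr.sum_sum_trilinear_coassoc {κ Λ : ι → Type*} (r : Repr k a ι)
    (rl : ∀ i, Repr k (r.left i) (κ i)) (rr : ∀ i, Repr k (r.right i) (Λ i))
    (ψ : C →ₗ[k] C →ₗ[k] C →ₗ[k] W) :
    ∑ i ∈ r.index, ∑ j ∈ (rl i).index, ψ ((rl i).left j) ((rl i).right j) (r.right i) =
      ∑ i ∈ r.index, ∑ j ∈ (rr i).index, ψ (r.left i) ((rr i).left j) ((rr i).right j) := by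
  simpa [map_sum] using
    congr(lift ((lift.equiv (RingHom.id k) C C W).toLinearMap ∘ₗ ψ) $(sum_tmul_tmul_eq r rl rr))

lemma Repr.sum_sum_sum_quadrilinear_coassoc {κ Λ : ι → Type*} (r : Repr k a ι)
    (rl : ∀ i, Repr k (r.left i) (κ i)) (rr : ∀ i, Repr k (r.right i) (Λ i))
    (Φ : C →ₗ[k] C →ₗ[k] C →ₗ[k] C →ₗ[k] W) :
    ∑ i ∈ r.index, ∑ j ∈ (rl i).index, ∑ m ∈ (rr i).index,
        Φ ((rl i).left j) ((rl i).right j) ((rr i).left m) ((rr i).right m) =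
      ∑ i ∈ r.index, ∑ s ∈ (ℛ k (r.right i)).index,
        ∑ n ∈ (ℛ k ((ℛ k (r.right i)).left s)).index,
          Φ (r.left i) ((ℛ k ((ℛ k (r.right i)).left s)).left n)
            ((ℛ k ((ℛ k (r.right i)).left s)).right n) ((ℛ k (r.right i)).right s) := by
  let ψ : C →ₗ[k] C →ₗ[k] C →ₗ[k] W :=
    Φ.compr₂ (LinearMap.lcomp k W comul ∘ₗ uncurry (RingHom.id k) C C W)
  have hψ : ∀ u v y, ψ u v y = lift (Φ u v) (comul y) := fun _ _ _ => rfl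
  calc _ = ∑ i ∈ r.index, ∑ j ∈ (rl i).index, ψ ((rl i).left j) ((rl i).right j) (r.right i) := by
        simp_rw [hψ, (rr _).sum_eq_lift_comul]
    _ = ∑ i ∈ r.index, ∑ s ∈ (ℛ k (r.right i)).index,
          ψ (r.left i) ((ℛ k (r.right i)).left s) ((ℛ k (r.right i)).right s) :=
        r.sum_sum_trilinear_coassoc rl _ ψ
    _ = _ := by
        refine Finset.sum_congr rfl fun i _ => ?_
        simp_rw [hψ, ← (ℛ k _).sum_eq_lift_comul]
        exact ((ℛ k (r.right i)).sum_sum_trilinear_coassoc _ _ (Φ (r.left i))).symm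

end Coalgebra

namespace DFinsupp

variable (k : Type*) {ι : Type*} (A : ι → Type*) [DecidableEq ι] [CommSemiring k]
  [∀ i, AddCommMonoid (A i)] [∀ i, Module k (A i)] [∀ i, CoalgebraStruct k (A i)]

def lsingleCoalgHom (i : ι) : A i →ₗc[k] Π₀ i, A i :=
  { lsingle i with
    counit_comp := counit_comp_lsingle k ι A i
    map_comp_comul := (comul_comp_lsingle k ι A i).symm }

@[simp] lemma lsingleCoalgHom_apply (i : ι) (x : A i) : lsingleCoalgHom k A i x = single i x := rfl

end DFinsupp

namespace HopfQuasigroup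

/- The last three hypotheses are the Hopf quasigroup axioms `S a₁ (a₂ b) = ε(a) b`,
`a₁ (S a₂ b) = ε(a) b` and `(b a₁) S a₂ = ε(a) b`. -/
variable {k C : Type*} [CommSemiring k] [AddCommMonoid C] [Module k C] [Coalgebra k C]
  {M : C →ₗ[k] C →ₗ[k] C} {S : C →ₗ[k] C} (e : C) {ι : Type*} {a : C}
  (hmul_one : ∀ b, M b e = b) (hone_mul : ∀ b, M e b = b)
  (hcomul_mul : ∀ b c, comul (M b c) = map₂ M M (comul b) (comul c))
  (hcomul_one : comul e = e ⊗ₜ[k] e)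
  (hantipode_mul_mul : lift M ∘ₗ map S (lift M) ∘ₗ (TensorProduct.assoc k C C C).toLinearMap ∘ₗ
    comul.rTensor C = (TensorProduct.lid k C).toLinearMap ∘ₗ counit.rTensor C)
  (hmul_antipode_mul : lift M ∘ₗ (lift M ∘ₗ S.rTensor C).lTensor C ∘ₗ
    (TensorProduct.assoc k C C C).toLinearMap ∘ₗ comul.rTensor C =
      (TensorProduct.lid k C).toLinearMap ∘ₗ counit.rTensor C)
  (hmul_mul_antipode : lift M ∘ₗ map (lift M) S ∘ₗ
    (TensorProduct.assoc k C C C).symm.toLinearMap ∘ₗ comul.lTensor C =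
      (TensorProduct.rid k C).toLinearMap ∘ₗ counit.lTensor C)

include hantipode_mul_mul in
lemma sum_antipode_mul_mul (r : Repr k a ι) (b : C) :
    ∑ i ∈ r.index, M (S (r.left i)) (M (r.right i) b) = counit (R := k) a • b := by
  simpa [← r.eq, map_sum, sum_tmul] using congr($hantipode_mul_mul (a ⊗ₜ b))

include hmul_antipode_mul in
lemma sum_mul_antipode_mul (r : Repr k a ι) (b : C) :
    ∑ i ∈ r.index, M (r.left i) (M (S (r.right i)) b) = counit (R := k) a • b := by
  simpa [← r.eq, map_sum, sum_tmul] using congr($hmul_antipode_mul (a ⊗ₜ b))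

include hmul_mul_antipode in
lemma sum_mul_mul_antipode (r : Repr k a ι) (b : C) :
    ∑ i ∈ r.index, M (M b (r.left i)) (S (r.right i)) = counit (R := k) a • b := by
  simpa [← r.eq, map_sum, tmul_sum] using congr($hmul_mul_antipode (b ⊗ₜ a))

include hone_mul hmul_mul_antipode in
lemma sum_mul_antipode (r : Repr k a ι) :
    ∑ i ∈ r.index, M (r.left i) (S (r.right i)) = counit (R := k) a • e := by
  simpa only [hone_mul] using sum_mul_mul_antipode hmul_mul_antipode r e

include hantipode_mul_mul in
lemma sum_lTensor_antipode_mul_lTensor_mul (r : Repr k a ι) (t : C ⊗[k] C) :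
    ∑ i ∈ r.index, (M (S (r.left i))).lTensor C ((M (r.right i)).lTensor C t) =
      counit (R := k) a • t := by
  induction t using TensorProduct.induction_on with
  | zero => simp
  | add t t' ht ht' => simp only [map_add, Finset.sum_add_distrib, ht, ht', smul_add]
  | tmul w₁ w₂ =>
    simp only [LinearMap.lTensor_tmul, ← tmul_sum, sum_antipode_mul_mul hantipode_mul_mul,
      tmul_smul]

include hantipode_mul_mul in
lemma sum_rTensor_antipode_mul_map₂_comul (r : Repr k a ι) (t : C ⊗[k] C) :
    ∑ i ∈ r.index, (M (S (r.left i))).rTensor C (map₂ M M (comul (r.right i)) t) =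
      (M a).lTensor C t := by
  induction t using TensorProduct.induction_on with
  | zero => simp
  | add t t' ht ht' => simp only [map_add, Finset.sum_add_distrib, ht, ht']
  | tmul w₁ w₂ =>
    let ψ : C →ₗ[k] C →ₗ[k] C →ₗ[k] C ⊗[k] C :=
      ((M ∘ₗ S).compl₂ (M.flip w₁)).compr₂
        (LinearMap.lcomp k _ (M.flip w₂) ∘ₗ TensorProduct.mk k C C)
    have hψ : ∀ u v v', ψ u v v' = M (S u) (M v w₁) ⊗ₜ M v' w₂ := fun _ _ _ => rfl
    calc _ = ∑ i ∈ r.index, ∑ j ∈ (ℛ k (r.right i)).index,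
          ψ (r.left i) ((ℛ k (r.right i)).left j) ((ℛ k (r.right i)).right j) := by
          simp [hψ, ← (ℛ k (r.right _)).eq, map_sum]
      _ = ∑ i ∈ r.index, ∑ j ∈ (ℛ k (r.left i)).index,
          ψ ((ℛ k (r.left i)).left j) ((ℛ k (r.left i)).right j) (r.right i) :=
        (r.sum_sum_trilinear_coassoc _ _ ψ).symm
      _ = ∑ i ∈ r.index, counit (R := k) (r.left i) • (w₁ ⊗ₜ M (r.right i) w₂) := by
        simp only [hψ, ← sum_tmul, sum_antipode_mul_mul hantipode_mul_mul, smul_tmul']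
      _ = _ := by simpa using r.sum_counit_smul_map (TensorProduct.mk k C C w₁ ∘ₗ M.flip w₂)

/- Both sides equal `(S a₁ ⊗ 1) Δ(a₂ S a₃)`: contracting `a₂ S a₃` gives the right-hand side,
contracting `S a₁ (a₂ ·)` in the first tensor factor gives the left-hand side. -/
include hmul_one hone_mul hcomul_mul hcomul_one hantipode_mul_mul hmul_mul_antipode in
lemma sum_lTensor_mul_comul_antipode (r : Repr k a ι) :
    ∑ i ∈ r.index, (M (r.left i)).lTensor C (comul (S (r.right i))) = S a ⊗ₜ e := by
  let ψ : C →ₗ[k] C →ₗ[k] C →ₗ[k] C ⊗[k] C :=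
    LinearMap.mk₂ k (fun x y => (M (S x)).rTensor C ∘ₗ comul ∘ₗ M y ∘ₗ S)
      (by intros; ext; simp [LinearMap.rTensor_add]) (by intros; ext; simp [LinearMap.rTensor_smul])
      (by intros; ext; simp) (by intros; ext; simp)
  have hψ : ∀ x y z, ψ x y z = (M (S x)).rTensor C (comul (M y (S z))) := fun _ _ _ => rfl
  have hcontract : ∀ x z : C, counit (R := k) z • (S x ⊗ₜ[k] e) =
      ∑ j ∈ (ℛ k z).index, ψ x ((ℛ k z).left j) ((ℛ k z).right j) := by
    intro x z
    simp only [hψ, ← map_sum, sum_mul_antipode e hone_mul hmul_mul_antipode, map_smul,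
      hcomul_one, LinearMap.rTensor_tmul, hmul_one, smul_tmul']
  calc _ = ∑ i ∈ r.index, ∑ j ∈ (ℛ k (r.left i)).index,
        ψ ((ℛ k (r.left i)).left j) ((ℛ k (r.left i)).right j) (r.right i) := by
        refine Finset.sum_congr rfl fun i _ => ?_
        simp only [hψ, hcomul_mul, sum_rTensor_antipode_mul_map₂_comul hantipode_mul_mul]
    _ = ∑ i ∈ r.index, ∑ j ∈ (ℛ k (r.right i)).index,
        ψ (r.left i) ((ℛ k (r.right i)).left j) ((ℛ k (r.right i)).right j) :=
      r.sum_sum_trilinear_coassoc _ _ ψ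
    _ = ∑ i ∈ r.index, counit (R := k) (r.right i) • (S (r.left i) ⊗ₜ[k] e) := by
      simp only [hcontract]
    _ = _ := r.sum_counit_right_smul_map ((TensorProduct.mk k C C).flip e ∘ₗ S)

include hmul_one hone_mul hcomul_mul hcomul_one hantipode_mul_mul hmul_mul_antipode in
theorem comul_antipode (a : C) :
    comul (S a) = map S S (TensorProduct.comm k C C (comul a)) := by
  let ψ : C →ₗ[k] C →ₗ[k] C →ₗ[k] C ⊗[k] C :=
    LinearMap.mk₂ k (fun u v => (M (S u)).lTensor C ∘ₗ (M v).lTensor C ∘ₗ comul ∘ₗ S)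
      (by intros; ext; simp [LinearMap.lTensor_add]) (by intros; ext; simp [LinearMap.lTensor_smul])
      (by intros; ext; simp [LinearMap.lTensor_add]) (by intros; ext; simp [LinearMap.lTensor_smul])
  have hψ : ∀ u v w, ψ u v w = (M (S u)).lTensor C ((M v).lTensor C (comul (S w))) :=
    fun _ _ _ => rfl
  set r := ℛ k a
  calc comul (S a) = ∑ i ∈ r.index, counit (R := k) (r.left i) • comul (S (r.right i)) :=
        (r.sum_counit_smul_map (comul ∘ₗ S)).symm
    _ = ∑ i ∈ r.index, ∑ j ∈ (ℛ k (r.left i)).index,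
        ψ ((ℛ k (r.left i)).left j) ((ℛ k (r.left i)).right j) (r.right i) := by
      simp only [hψ, sum_lTensor_antipode_mul_lTensor_mul hantipode_mul_mul]
    _ = ∑ i ∈ r.index, ∑ j ∈ (ℛ k (r.right i)).index,
        ψ (r.left i) ((ℛ k (r.right i)).left j) ((ℛ k (r.right i)).right j) :=
      r.sum_sum_trilinear_coassoc _ _ ψ
    _ = ∑ i ∈ r.index, S (r.right i) ⊗ₜ S (r.left i) := by
      simp only [hψ, ← map_sum, sum_lTensor_mul_comul_antipode e hmul_one hone_mul hcomul_mul
        hcomul_one hantipode_mul_mul hmul_mul_antipode, LinearMap.lTensor_tmul, hmul_one]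
    _ = _ := by simp [r, ← (ℛ k a).eq, map_sum]

include hmul_one hone_mul hcomul_mul hcomul_one hantipode_mul_mul hmul_mul_antipode in
lemma sum_repr_antipode {W : Type*} [AddCommMonoid W] [Module k W] (F : C →ₗ[k] C →ₗ[k] W)
    {κ : Type*} (ru : Repr k (S a) κ) (r : Repr k a ι) :
    ∑ s ∈ ru.index, F (ru.left s) (ru.right s) =
      ∑ i ∈ r.index, F (S (r.right i)) (S (r.left i)) := by
  rw [ru.sum_eq_lift_comul, comul_antipode e hmul_one hone_mul hcomul_mul hcomul_one
    hantipode_mul_mul hmul_mul_antipode, ← r.eq]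
  simp [map_sum]

include hmul_one hone_mul hcomul_mul hcomul_one hantipode_mul_mul hmul_antipode_mul
  hmul_mul_antipode in
theorem sum_associator_antipode {g : C} {κ₁ κ₂ : ι → Type*} {κ₃ : Type*} (r : Repr k a ι)
    (rl : ∀ i, Repr k (r.left i) (κ₁ i)) (ru : ∀ i, Repr k (S (r.right i)) (κ₂ i))
    (rg : Repr k g κ₃) :
    ∑ i ∈ r.index, ∑ j ∈ (rl i).index, ∑ s ∈ (ru i).index, ∑ t ∈ rg.index,
      M (M (M ((rl i).left j) ((ru i).left s)) (rg.left t))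
        (S (M ((rl i).right j) (M ((ru i).right s) (rg.right t)))) =
      (counit (R := k) a * counit (R := k) g) • e := by
  have hfixed : ∀ g₁ g₂ : C, ∑ i ∈ r.index, ∑ j ∈ (rl i).index, ∑ s ∈ (ru i).index,
      M (M (M ((rl i).left j) ((ru i).left s)) g₁)
        (S (M ((rl i).right j) (M ((ru i).right s) g₂))) = counit (R := k) a • M g₁ (S g₂) := by
    intro g₁ g₂
    let Φ : C →ₗ[k] C →ₗ[k] C →ₗ[k] C →ₗ[k] C :=
      LinearMap.mk₂ k (fun u v => LinearMap.mk₂ k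
          (fun w z => M (M (M u (S z)) g₁) (S (M v (M (S w) g₂))))
          (by intros; simp) (by intros; simp) (by intros; simp) (by intros; simp))
        (by intros; ext; simp) (by intros; ext; simp) (by intros; ext; simp) (by intros; ext; simp)
    have hΦ : ∀ u v w z, Φ u v w z = M (M (M u (S z)) g₁) (S (M v (M (S w) g₂))) :=
      fun _ _ _ _ => rfl
    calc _ = ∑ i ∈ r.index, ∑ j ∈ (rl i).index, ∑ m ∈ (ℛ k (r.right i)).index,
          Φ ((rl i).left j) ((rl i).right j) ((ℛ k (r.right i)).left m)
            ((ℛ k (r.right i)).right m) := by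
          refine Finset.sum_congr rfl fun i _ => Finset.sum_congr rfl fun j _ => ?_
          simpa only [hΦ, LinearMap.compl₁₂_apply, LinearMap.comp_apply, LinearMap.flip_apply]
            using sum_repr_antipode e hmul_one hone_mul hcomul_mul hcomul_one
              hantipode_mul_mul hmul_mul_antipode
              (M.compl₁₂ (M.flip g₁ ∘ₗ M ((rl i).left j)) (S ∘ₗ M ((rl i).right j) ∘ₗ M.flip g₂))
              (ru i) (ℛ k (r.right i))
      _ = ∑ i ∈ r.index, ∑ s ∈ (ℛ k (r.right i)).index,
          ∑ n ∈ (ℛ k ((ℛ k (r.right i)).left s)).index,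
            Φ (r.left i) ((ℛ k ((ℛ k (r.right i)).left s)).left n)
              ((ℛ k ((ℛ k (r.right i)).left s)).right n) ((ℛ k (r.right i)).right s) :=
        r.sum_sum_sum_quadrilinear_coassoc rl _ Φ
      _ = ∑ i ∈ r.index, ∑ s ∈ (ℛ k (r.right i)).index,
          counit (R := k) ((ℛ k (r.right i)).left s) •
            M (M (M (r.left i) (S ((ℛ k (r.right i)).right s))) g₁) (S g₂) := by
        simp only [hΦ, ← map_sum, sum_mul_antipode_mul hmul_antipode_mul, map_smul]
      _ = ∑ i ∈ r.index, M (M (M (r.left i) (S (r.right i))) g₁) (S g₂) := by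
        refine Finset.sum_congr rfl fun i _ => ?_
        simpa using (ℛ k (r.right i)).sum_counit_smul_map
          (M.flip (S g₂) ∘ₗ M.flip g₁ ∘ₗ M (r.left i) ∘ₗ S)
      _ = _ := by
        simp only [← LinearMap.sum_apply, ← map_sum, sum_mul_antipode e hone_mul hmul_mul_antipode,
          map_smul, LinearMap.smul_apply, hone_mul]
  calc _ = ∑ t ∈ rg.index, ∑ i ∈ r.index, ∑ j ∈ (rl i).index, ∑ s ∈ (ru i).index,
        M (M (M ((rl i).left j) ((ru i).left s)) (rg.left t))
          (S (M ((rl i).right j) (M ((ru i).right s) (rg.right t)))) := by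
        simp only [Finset.sum_comm (s := rg.index)]
    _ = _ := by
      simp only [hfixed, ← Finset.smul_sum, sum_mul_antipode e hone_mul hmul_mul_antipode,
        smul_smul]

end HopfQuasigroup

lemma single_gcl {Q : Type*} [DecidableEq Q] {H : Q → Type*} {k : Type*} [CommSemiring k]
    [∀ p, AddCommMonoid (H p)] [∀ p, Module k (H p)] {p q : Q} (h : p = q) (x : H p) :
    DFinsupp.single q (gcl (k := k) h x) = DFinsupp.single p x := by
  subst h; rfl

namespace GradedHopfQuasigroup

section DirectSum

variable {k : Type*} [CommRing k] {Q : Type*} [DecidableEq Q] {G : QuasigroupStruct Q}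
  {H : Q → Type*} [∀ p, AddCommGroup (H p)] [∀ p, Module k (H p)] [∀ p, Coalgebra k (H p)]
  (A : GradedHopfQuasigroup k G H)

noncomputable def sumMul : (Π₀ p, H p) →ₗ[k] (Π₀ p, H p) →ₗ[k] (Π₀ p, H p) :=
  DFinsupp.lsum k fun p =>
    (DFinsupp.lsum k fun q => ((A.mul p q).compr₂ (DFinsupp.lsingle (G.mul p q))).flip).flip

@[simp] lemma sumMul_single {p q : Q} (x : H p) (y : H q) :
    A.sumMul (DFinsupp.single p x) (DFinsupp.single q y) =
      DFinsupp.single (G.mul p q) (A.mul p q x y) := by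
  simp [sumMul]

noncomputable def sumAntipode : (Π₀ p, H p) →ₗ[k] (Π₀ p, H p) :=
  DFinsupp.lsum k fun p => DFinsupp.lsingle (G.inv p) ∘ₗ A.antipode p

@[simp] lemma sumAntipode_single {p : Q} (x : H p) :
    A.sumAntipode (DFinsupp.single p x) = DFinsupp.single (G.inv p) (A.antipode p x) := by
  simp [sumAntipode]

noncomputable def sumOne : Π₀ p, H p := DFinsupp.single G.one A.one

lemma sumMul_sumOne (b : Π₀ p, H p) : A.sumMul b A.sumOne = b := by
  induction b using DFinsupp.induction with
  | h0 => simp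
  | ha p x b _ _ hb =>
    rw [map_add, LinearMap.add_apply, hb, sumOne, sumMul_single,
      ← single_gcl (k := k) (G.mul_one p), A.mul_one']

lemma sumOne_sumMul (b : Π₀ p, H p) : A.sumMul A.sumOne b = b := by
  induction b using DFinsupp.induction with
  | h0 => simp
  | ha p x b _ _ hb =>
    rw [map_add, hb, sumOne, sumMul_single, ← single_gcl (k := k) (G.one_mul p), A.one_mul']

lemma comul_sumOne : comul (R := k) A.sumOne = A.sumOne ⊗ₜ[k] A.sumOne := by
  simp [sumOne, A.comul_one]

lemma comul_sumMul (a b : Π₀ p, H p) :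
    comul (R := k) (A.sumMul a b) = map₂ A.sumMul A.sumMul (comul a) (comul b) := by
  suffices A.sumMul.compr₂ comul = (map₂ A.sumMul A.sumMul).compl₁₂ comul comul from
    LinearMap.congr_fun₂ this a b
  refine DFinsupp.lhom_ext fun p x => DFinsupp.lhom_ext fun q y => ?_
  simp [A.comul_mul, ← (ℛ k x).eq, ← (ℛ k y).eq, map_sum, sum_tmul, tmul_sum]

lemma sumAntipode_sumMul_sumMul :
    lift A.sumMul ∘ₗ map A.sumAntipode (lift A.sumMul) ∘ₗ
      (TensorProduct.assoc k _ _ _).toLinearMap ∘ₗ comul.rTensor (Π₀ p, H p) =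
        (TensorProduct.lid k _).toLinearMap ∘ₗ counit.rTensor (Π₀ p, H p) := by
  refine TensorProduct.ext (DFinsupp.lhom_ext fun p x => DFinsupp.lhom_ext fun q y => ?_)
  have hax := congr(DFinsupp.lsingle (R := k) _ $(A.antipode_mul_left p q x y))
  rw [← (ℛ k x).sum_eq_lift_comul] at hax
  simpa [← (ℛ k x).eq, map_sum, sum_tmul, single_gcl, DFinsupp.single_smul] using hax

lemma sumMul_sumAntipode_sumMul :
    lift A.sumMul ∘ₗ (lift A.sumMul ∘ₗ A.sumAntipode.rTensor _).lTensor (Π₀ p, H p) ∘ₗ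
      (TensorProduct.assoc k _ _ _).toLinearMap ∘ₗ comul.rTensor (Π₀ p, H p) =
        (TensorProduct.lid k _).toLinearMap ∘ₗ counit.rTensor (Π₀ p, H p) := by
  refine TensorProduct.ext (DFinsupp.lhom_ext fun p x => DFinsupp.lhom_ext fun q y => ?_)
  have hax := congr(DFinsupp.lsingle (R := k) _ $(A.antipode_mul_left' p q x y))
  rw [← (ℛ k x).sum_eq_lift_comul] at hax
  simpa [← (ℛ k x).eq, map_sum, sum_tmul, single_gcl, DFinsupp.single_smul] using hax

lemma sumMul_sumMul_sumAntipode :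
    lift A.sumMul ∘ₗ map (lift A.sumMul) A.sumAntipode ∘ₗ
      (TensorProduct.assoc k _ _ _).symm.toLinearMap ∘ₗ comul.lTensor (Π₀ p, H p) =
        (TensorProduct.rid k _).toLinearMap ∘ₗ counit.lTensor (Π₀ p, H p) := by
  refine TensorProduct.ext (DFinsupp.lhom_ext fun q y => DFinsupp.lhom_ext fun p x => ?_)
  have hax := congr(DFinsupp.lsingle (R := k) _ $(A.antipode_mul_right' p q x y))
  rw [← (ℛ k x).sum_eq_lift_comul] at hax
  simpa [← (ℛ k x).eq, map_sum, tmul_sum, single_gcl, DFinsupp.single_smul] using hax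

end DirectSum

variable [DecidableEq Q]

lemma single_delta0 (hassoc : ∀ a b c, G.mul (G.mul a b) c = G.mul a (G.mul b c))
    {p q r : Q} (x : H p) (y : H q) (z : H r) {ι₁ ι₂ ι₃ : Type*} (rx : Repr k x ι₁)
    (ry : Repr k y ι₂) (rz : Repr k z ι₃) :
    DFinsupp.single G.one (delta0 A hassoc p q r x y z) =
      ∑ j ∈ rx.index, ∑ s ∈ ry.index, ∑ t ∈ rz.index,
        DFinsupp.single _ (A.mul _ _ (A.mul _ r (A.mul p q (rx.left j) (ry.left s)) (rz.left t))
          (A.antipode _ (A.mul p _ (rx.right j) (A.mul q r (ry.right s) (rz.right t))))) := by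
  rw [← DFinsupp.lsingle_apply (R := k)]
  simp only [delta0, comul3, mulLeft, mulRight, mm, LinearMap.comp_apply,
    TensorProduct.lcurry_apply, TensorProduct.curry_apply, LinearEquiv.coe_coe,
    TensorProduct.map_tmul, ← rx.eq, ← ry.eq, ← rz.eq]
  simp only [sum_tmul, tmul_sum, map_sum, TensorProduct.tensorTensorTensorComm_tmul,
    LinearMap.lTensor_tmul, TensorProduct.map_tmul, TensorProduct.assoc_symm_tmul,
    TensorProduct.lift.tmul, LinearMap.comp_apply, LinearMap.id_apply, LinearEquiv.coe_coe,
    DFinsupp.lsingle_apply, single_gcl]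
  exact (Finset.sum_comm.trans (Finset.sum_congr rfl fun _ _ => Finset.sum_comm)).trans
    Finset.sum_comm

end GradedHopfQuasigroup

/-- `δ(h₁, S_p(h₂), g) = ε_p(h) ε_q(g) 1`. -/
theorem gradedHopfQuasigroup_associator_antipode
    (hassoc : ∀ a b c, G.mul (G.mul a b) c = G.mul a (G.mul b c))
    (p q : Q) (h : H p) (g : H q) :
    TensorProduct.lift
        (((delta0 A hassoc p (G.inv p) q).compl₂ (A.antipode p)).compr₂
          (LinearMap.applyₗ g))
        (Coalgebra.comul h)
      = (Coalgebra.counit (R := k) h * Coalgebra.counit (R := k) g) • A.one := by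
  classical
  have key := HopfQuasigroup.sum_associator_antipode A.sumOne A.sumMul_sumOne A.sumOne_sumMul
    A.comul_sumMul A.comul_sumOne A.sumAntipode_sumMul_sumMul A.sumMul_sumAntipode_sumMul
    A.sumMul_sumMul_sumAntipode ((ℛ k h).induced (DFinsupp.lsingleCoalgHom k H p))
    (fun i => (ℛ k ((ℛ k h).left i)).induced (DFinsupp.lsingleCoalgHom k H p))
    (fun i => ((ℛ k (A.antipode p ((ℛ k h).right i))).induced
      (DFinsupp.lsingleCoalgHom k H (G.inv p))).ofEq (A.sumAntipode_single _).symm)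
    ((ℛ k g).induced (DFinsupp.lsingleCoalgHom k H q))
  dsimp only [Repr.ofEq] at key
  simp only [Repr.induced_index, Repr.induced_left, Repr.induced_right, Function.comp_apply,
    DFinsupp.lsingleCoalgHom_apply, GradedHopfQuasigroup.sumMul_single,
    GradedHopfQuasigroup.sumAntipode_single, DFinsupp.counit_single] at key
  apply DFinsupp.single_injective (i := G.one)
  rw [DFinsupp.single_smul, ← GradedHopfQuasigroup.sumOne, ← key, ← (ℛ k h).sum_eq_lift_comul,
    ← DFinsupp.lsingle_apply (R := k), map_sum]
  refine Finset.sum_congr rfl fun i _ => ?_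
  exact A.single_delta0 hassoc _ _ _ (ℛ k _) (ℛ k _) (ℛ k _)
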